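/- arXiv:1603.08410 — 2 statements merged into one kernel-verified Lean document; each statement's English description precedes it below -/
import Mathlib

section
/- Let (ξₖ, ηₖ) be i.i.d. copies of (ξ, η) with a := E ξ > 0, E log(1 + η) < ∞, and η ≥ 0 (with η > 0 with positive probability so that Dₙ > 0 eventually). Then (log Dₙ)/n converges to a almost surely as n → ∞, where Dₙ = Σ_{k=1}^n ηₖ e^{S_k} and Sₙ = ξ₁ + … + ξₙ. -/
/-!
By the strong law of large numbers, almost surely `Sₙ / n → a` and the Cesàro means of
`log (1 + ηₖ)` converge to `E log (1 + η) > 0`; everything else is deterministic.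
Since `log (1 + t) ≤ t ≤ exp (log (1 + t))`, the perpetuity `Dₙ` lies between
`∑ log (1 + ηₖ) e^{S_{k+1}}` and `∑ exp (log (1 + ηₖ) + S_{k+1})`. The upper sum has `n` terms,
each at most `e^{(a + o(1)) n}` because `log (1 + ηₙ) = o(n)`. In the lower sum the weights
`log (1 + ηₖ)` have positive density, so for `θ < 1` their total over the window `[θ n, n)` tends
to infinity, while every exponent in that window exceeds `(a - ε) θ n`.
-/

open MeasureTheory ProbabilityTheory Filter Finset Real Topology

lemma tendsto_sum_range_succ_div {y : ℕ → ℝ} {L : ℝ}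
    (h : Tendsto (fun n : ℕ => (∑ k ∈ range n, y k) / n) atTop (𝓝 L)) :
    Tendsto (fun n : ℕ => (∑ k ∈ range (n + 1), y k) / n) atTop (𝓝 L) := by
  have hratio : Tendsto (fun n : ℕ => ((n : ℝ) + 1) / n) atTop (𝓝 1) := by
    have h1 := tendsto_one_div_atTop_nhds_zero_nat.const_add (1 : ℝ)
    rw [add_zero] at h1
    refine h1.congr' ?_
    filter_upwards [eventually_ne_atTop 0] with n hn
    field_simp
  have hprod := (h.comp (tendsto_add_atTop_nat 1)).mul hratio
  rw [mul_one] at hprod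
  refine hprod.congr' ?_
  filter_upwards [eventually_ne_atTop 0] with n hn
  simp only [Function.comp_apply, Nat.cast_add, Nat.cast_one]
  field_simp

lemma tendsto_div_natCast_zero_of_tendsto_sum_range_div {y : ℕ → ℝ} {L : ℝ}
    (h : Tendsto (fun n : ℕ => (∑ k ∈ range n, y k) / n) atTop (𝓝 L)) :
    Tendsto (fun n : ℕ => y n / n) atTop (𝓝 0) := by
  have hdiff := (tendsto_sum_range_succ_div h).sub h
  rw [sub_self] at hdiff
  refine hdiff.congr fun n => ?_
  rw [sum_range_succ, ← sub_div, add_sub_cancel_left]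

lemma tendsto_sum_Ico_ceil_mul_atTop {w : ℕ → ℝ} {L θ : ℝ} (hL : 0 < L) (hθ₀ : 0 < θ)
    (hθ₁ : θ < 1) (h : Tendsto (fun n : ℕ => (∑ k ∈ range n, w k) / n) atTop (𝓝 L)) :
    Tendsto (fun n : ℕ => ∑ k ∈ Ico ⌈θ * n⌉₊ n, w k) atTop atTop := by
  have hceil : Tendsto (fun n : ℕ => ⌈θ * n⌉₊) atTop atTop :=
    tendsto_nat_ceil_atTop.comp (tendsto_natCast_atTop_atTop.const_mul_atTop hθ₀)
  have hceil_div : Tendsto (fun n : ℕ => (⌈θ * n⌉₊ : ℝ) / n) atTop (𝓝 θ) :=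
    (tendsto_nat_ceil_mul_div_atTop hθ₀.le).comp tendsto_natCast_atTop_atTop
  have hhead : Tendsto (fun n : ℕ => (∑ k ∈ range ⌈θ * n⌉₊, w k) / n) atTop (𝓝 (L * θ)) := by
    refine ((h.comp hceil).mul hceil_div).congr' ?_
    filter_upwards [hceil.eventually_ne_atTop 0] with n hn
    simp only [Function.comp_apply]
    field_simp
  have hceil_le : ∀ n : ℕ, ⌈θ * n⌉₊ ≤ n := fun n =>
    Nat.ceil_le.2 (mul_le_of_le_one_left n.cast_nonneg hθ₁.le)
  have hwindow : Tendsto (fun n : ℕ => (∑ k ∈ Ico ⌈θ * n⌉₊ n, w k) / n) atTop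
      (𝓝 (L - L * θ)) :=
    (h.sub hhead).congr fun n => by rw [sum_Ico_eq_sub _ (hceil_le n), sub_div]
  refine ((hwindow.pos_mul_atTop (by nlinarith) tendsto_natCast_atTop_atTop)).congr' ?_
  filter_upwards [eventually_ne_atTop 0] with n hn
  field_simp

lemma eventually_exp_mul_lt_sum_mul_exp {w x : ℕ → ℝ} {L a b : ℝ} (hw : ∀ k, 0 ≤ w k)
    (hL : 0 < L) (ha : 0 < a) (hb : b < a)
    (hW : Tendsto (fun n : ℕ => (∑ k ∈ range n, w k) / n) atTop (𝓝 L))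
    (hx : Tendsto (fun k : ℕ => x k / k) atTop (𝓝 a)) :
    ∀ᶠ n : ℕ in atTop, exp (b * n) < ∑ k ∈ range n, w k * exp (x k) := by
  obtain ⟨r, hbr, hra⟩ := exists_between (max_lt hb ha)
  obtain ⟨c, hrc, hca⟩ := exists_between hra
  have hr : 0 < r := (le_max_right b 0).trans_lt hbr
  have hc : 0 < c := hr.trans hrc
  obtain ⟨M, hM⟩ := eventually_atTop.1 <|
    (hx.eventually (eventually_gt_nhds hca)).and (eventually_gt_atTop 0)
  have hceil : Tendsto (fun n : ℕ => ⌈r / c * n⌉₊) atTop atTop :=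
    tendsto_nat_ceil_atTop.comp (tendsto_natCast_atTop_atTop.const_mul_atTop (by positivity))
  filter_upwards [tendsto_sum_Ico_ceil_mul_atTop hL (by positivity) ((div_lt_one hc).2 hrc) hW
      |>.eventually_ge_atTop 1, hceil.eventually_ge_atTop M, eventually_gt_atTop 0]
    with n hwindow hM_le hn
  have hexp : ∀ k ∈ Ico ⌈r / c * n⌉₊ n, r * n ≤ x k := by
    intro k hk
    obtain ⟨hxk, hk0⟩ := hM k (hM_le.trans (mem_Ico.1 hk).1)
    have hck : r * n ≤ c * k := by
      have := Nat.ceil_le.1 (mem_Ico.1 hk).1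
      rw [div_mul_eq_mul_div, div_le_iff₀ hc] at this
      linarith
    rw [lt_div_iff₀ (by exact_mod_cast hk0)] at hxk
    linarith
  calc exp (b * n) < exp (r * n) := exp_lt_exp.2 (by gcongr; exact (le_max_left b 0).trans_lt hbr)
    _ ≤ ∑ k ∈ Ico ⌈r / c * n⌉₊ n, w k * exp (r * n) := by
      rw [← sum_mul]; exact le_mul_of_one_le_left (exp_pos _).le hwindow
    _ ≤ ∑ k ∈ Ico ⌈r / c * n⌉₊ n, w k * exp (x k) :=
      sum_le_sum fun k hk => mul_le_mul_of_nonneg_left (exp_le_exp.2 (hexp k hk)) (hw k)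
    _ ≤ ∑ k ∈ range n, w k * exp (x k) := by
      rw [range_eq_Ico]
      exact sum_le_sum_of_subset_of_nonneg (Ico_subset_Ico_left (Nat.zero_le _))
        fun k _ _ => mul_nonneg (hw k) (exp_pos _).le

lemma eventually_sum_exp_lt_exp_mul {x : ℕ → ℝ} {a b : ℝ} (ha : 0 ≤ a) (hab : a < b)
    (hx : Tendsto (fun k : ℕ => x k / k) atTop (𝓝 a)) :
    ∀ᶠ n : ℕ in atTop, ∑ k ∈ range n, exp (x k) < exp (b * n) := by
  obtain ⟨c, hac, hcb⟩ := exists_between hab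
  obtain ⟨C, hC⟩ : ∃ C, ∀ k : ℕ, x k ≤ C + c * k := by
    have hlin : ∀ᶠ k : ℕ in atTop, x k - c * k ≤ 0 := by
      filter_upwards [hx.eventually (eventually_lt_nhds hac), eventually_gt_atTop 0] with k hk hk0
      rw [div_lt_iff₀ (by exact_mod_cast hk0)] at hk
      linarith
    obtain ⟨C, hC⟩ := (isBoundedUnder_of_eventually_le hlin).bddAbove_range
    exact ⟨C, fun k => by linarith [hC (Set.mem_range_self k)]⟩
  have hrate : Tendsto (fun n : ℕ => log n / n + C / n + c) atTop (𝓝 c) := by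
    have hlog : Tendsto (fun n : ℕ => log n / n) atTop (𝓝 0) :=
      (isLittleO_log_id_atTop.comp_tendsto tendsto_natCast_atTop_atTop).tendsto_div_nhds_zero
    simpa using (hlog.add (tendsto_const_div_atTop_nhds_zero_nat C)).add_const c
  filter_upwards [hrate.eventually (eventually_lt_nhds hcb), eventually_gt_atTop 0] with n hlt hn
  have hn' : (0 : ℝ) < n := by exact_mod_cast hn
  calc ∑ k ∈ range n, exp (x k) ≤ ∑ _k ∈ range n, exp (C + c * n) :=
        sum_le_sum fun k hk => exp_le_exp.2 <| (hC k).trans <| by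
          gcongr
          exacts [ha.trans hac.le, mod_cast (mem_range.1 hk).le]
    _ = exp (log n + (C + c * n)) := by
      rw [sum_const, card_range, nsmul_eq_mul, exp_add (log _), exp_log hn']
    _ < exp (b * n) := by
      rw [exp_lt_exp]
      have := (mul_lt_mul_iff_of_pos_right hn').2 hlt
      field_simp at this
      linarith

theorem tendsto_log_sum_mul_exp_div {η x : ℕ → ℝ} {a L : ℝ} (ha : 0 < a) (hL : 0 < L)
    (hη : ∀ k, 0 ≤ η k)
    (hlog : Tendsto (fun n : ℕ => (∑ k ∈ range n, log (1 + η k)) / n) atTop (𝓝 L))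
    (hx : Tendsto (fun k : ℕ => x k / k) atTop (𝓝 a)) :
    Tendsto (fun n : ℕ => log (∑ k ∈ range n, η k * exp (x k)) / n) atTop (𝓝 a) := by
  have hlog_nonneg : ∀ k, 0 ≤ log (1 + η k) := fun k => log_nonneg (by linarith [hη k])
  have hlower : ∀ n, ∑ k ∈ range n, log (1 + η k) * exp (x k) ≤
      ∑ k ∈ range n, η k * exp (x k) := fun n =>
    sum_le_sum fun k _ => mul_le_mul_of_nonneg_right
      (by linarith [log_le_sub_one_of_pos (by linarith [hη k] : 0 < 1 + η k)]) (exp_pos _).le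
  have hupper : ∀ n, ∑ k ∈ range n, η k * exp (x k) ≤
      ∑ k ∈ range n, exp (log (1 + η k) + x k) := fun n =>
    sum_le_sum fun k _ => by
      rw [exp_add, exp_log (by linarith [hη k])]
      exact mul_le_mul_of_nonneg_right (by linarith) (exp_pos _).le
  have hx' : Tendsto (fun k : ℕ => (log (1 + η k) + x k) / k) atTop (𝓝 a) := by
    simpa only [add_div, zero_add] using
      (tendsto_div_natCast_zero_of_tendsto_sum_range_div hlog).add hx
  have hpos : ∀ᶠ n : ℕ in atTop, 0 < ∑ k ∈ range n, η k * exp (x k) := by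
    filter_upwards [eventually_exp_mul_lt_sum_mul_exp hlog_nonneg hL ha ha hlog hx] with n hn
    exact (exp_pos _).trans (hn.trans_le (hlower n))
  rw [tendsto_order]
  refine ⟨fun b hb => ?_, fun b hb => ?_⟩
  · filter_upwards [eventually_exp_mul_lt_sum_mul_exp hlog_nonneg hL ha hb hlog hx, hpos,
      eventually_gt_atTop 0] with n hn hDn hn₀
    rw [lt_div_iff₀ (by exact_mod_cast hn₀), lt_log_iff_exp_lt hDn]
    exact hn.trans_le (hlower n)
  · filter_upwards [eventually_sum_exp_lt_exp_mul ha.le hb hx', hpos,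
      eventually_gt_atTop 0] with n hn hDn hn₀
    rw [div_lt_iff₀ (by exact_mod_cast hn₀), log_lt_iff_lt_exp hDn]
    exact (hupper n).trans_lt hn

section Probability

variable {Ω β : Type*} [MeasurableSpace Ω] [MeasurableSpace β] {μ : Measure Ω}

theorem strong_law_ae_comp {Z : ℕ → Ω → β} (hindep : iIndepFun Z μ)
    (hident : ∀ k, IdentDistrib (Z k) (Z 0) μ μ) {g : β → ℝ} (hg : Measurable g)
    (hint : Integrable (fun ω => g (Z 0 ω)) μ) :
    ∀ᵐ ω ∂μ, Tendsto (fun n : ℕ => (∑ k ∈ range n, g (Z k ω)) / n) atTop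
      (𝓝 (∫ ω, g (Z 0 ω) ∂μ)) :=
  strong_law_ae_real (fun k ω => g (Z k ω)) hint
    (fun _ _ hij => (hindep.comp (fun _ => g) fun _ => hg).indepFun hij)
    fun k => (hident k).comp hg

lemma integral_log_one_add_pos {f : Ω → ℝ} (hf : 0 ≤ᵐ[μ] f) (hpos : 0 < μ {ω | 0 < f ω})
    (hint : Integrable (fun ω => log (1 + f ω)) μ) :
    0 < ∫ ω, log (1 + f ω) ∂μ := by
  rw [integral_pos_iff_support_of_nonneg_ae
    (hf.mono fun ω hω => log_nonneg (by linarith [show (0 : ℝ) ≤ f ω from hω])) hint]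
  exact hpos.trans_le <| measure_mono fun ω (hω : 0 < f ω) => (log_pos (by linarith)).ne'

end Probability

theorem log_perpetuity_lln_general
    {Ω : Type*} [MeasurableSpace Ω] (μ : Measure Ω)
    (ξ η : ℕ → Ω → ℝ) (a : ℝ) (ha : 0 < a)
    (hindep : iIndepFun (fun k ω => (ξ k ω, η k ω)) μ)
    (hident : ∀ k, IdentDistrib (fun ω => (ξ k ω, η k ω)) (fun ω => (ξ 0 ω, η 0 ω)) μ μ)
    (hint : Integrable (ξ 0) μ)
    (hmean : μ[ξ 0] = a)
    (hnonneg : ∀ᵐ ω ∂μ, 0 ≤ η 0 ω)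
    (hposprob : 0 < μ {ω | 0 < η 0 ω})
    (hlog : Integrable (fun ω => Real.log (1 + η 0 ω)) μ) :
    ∀ᵐ ω ∂μ,
      Tendsto (fun n => Real.log (∑ k ∈ Finset.range n,
          η k ω * Real.exp (∑ i ∈ Finset.range (k + 1), ξ i ω)) / n)
        atTop (nhds a) := by
  have hlln_ξ := strong_law_ae_comp hindep hident measurable_fst hint
  have hlln_log := strong_law_ae_comp hindep hident
    (measurable_log.comp (measurable_const.add measurable_snd)) hlog
  have hη : ∀ᵐ ω ∂μ, ∀ k, 0 ≤ η k ω := ae_all_iff.2 fun k =>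
    ((hident k).comp measurable_snd).symm.ae_snd measurableSet_Ici hnonneg
  filter_upwards [hlln_ξ, hlln_log, hη] with ω hξω hlogω hηω
  refine tendsto_log_sum_mul_exp_div ha (integral_log_one_add_pos hnonneg hposprob hlog) hηω
    hlogω (tendsto_sum_range_succ_div ?_)
  simpa only [← hmean] using hξω

theorem log_perpetuity_lln
    {Ω : Type*} [MeasurableSpace Ω] (μ : Measure Ω) [IsProbabilityMeasure μ]
    (ξ η : ℕ → Ω → ℝ) (a : ℝ) (ha : 0 < a)
    (hmeas : ∀ k, Measurable (fun ω => (ξ k ω, η k ω)))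
    (hindep : iIndepFun (fun k ω => (ξ k ω, η k ω)) μ)
    (hident : ∀ k, IdentDistrib (fun ω => (ξ k ω, η k ω)) (fun ω => (ξ 0 ω, η 0 ω)) μ μ)
    (hint : Integrable (ξ 0) μ)
    (hmean : μ[ξ 0] = a)
    (hnonneg : ∀ᵐ ω ∂μ, 0 ≤ η 0 ω)
    (hposprob : 0 < μ {ω | 0 < η 0 ω})
    (hlog : Integrable (fun ω => Real.log (1 + η 0 ω)) μ) :
    ∀ᵐ ω ∂μ,
      Tendsto (fun n => Real.log (∑ k ∈ Finset.range n,
          η k ω * Real.exp (∑ i ∈ Finset.range (k + 1), ξ i ω)) / n)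
        atTop (nhds a) :=
  log_perpetuity_lln_general μ ξ η a ha hindep hident hint hmean hnonneg hposprob hlog
end

section
/- Let η ≥ 0 be a random variable with E[log²(1 + η)] < ∞. Then E[log(1 + η e^{−x})] ≤ e^{−x/2} + o(1/x) as x → ∞; in particular x·E[log(1 + η e^{−x})] → 0. -/
open MeasureTheory Filter Asymptotics

theorem expectation_log_small
    {Ω : Type*} [MeasurableSpace Ω] (μ : Measure Ω) [IsProbabilityMeasure μ]
    (η : Ω → ℝ) (hmeas : Measurable η) (hnonneg : ∀ᵐ ω ∂μ, 0 ≤ η ω)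
    (hlog2 : Integrable (fun ω => (Real.log (1 + η ω)) ^ 2) μ) :
    (∃ g : ℝ → ℝ,
        (∀ᶠ x in atTop, ∫ ω, Real.log (1 + η ω * Real.exp (-x)) ∂μ
          ≤ Real.exp (-x / 2) + g x) ∧
        g =o[atTop] fun x => 1 / x) ∧
    Tendsto (fun x => x * ∫ ω, Real.log (1 + η ω * Real.exp (-x)) ∂μ)
      atTop (nhds 0) := by
  set L : Ω → ℝ := fun ω => Real.log (1 + η ω) with hL
  have hLmeas : Measurable L := Real.measurable_log.comp (measurable_const.add hmeas)
  have hLnonneg : ∀ᵐ ω ∂μ, 0 ≤ L ω := by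
    filter_upwards [hnonneg] with ω hω
    exact Real.log_nonneg (by linarith)
  -- integrability of L
  have hLint : Integrable L μ := by
    refine Integrable.mono' ((integrable_const (1:ℝ)).add hlog2)
      hLmeas.aestronglyMeasurable ?_
    filter_upwards [hLnonneg] with ω hω
    rw [Real.norm_eq_abs, abs_of_nonneg hω]
    simp only [Pi.add_apply]
    nlinarith [sq_nonneg (L ω - 1)]
  -- measurable tail sets
  have hAmeas : ∀ x : ℝ, MeasurableSet {ω | Real.exp (x/2) < η ω} :=
    fun x => measurableSet_lt measurable_const hmeas
  -- the tail integral
  set T : ℝ → ℝ := fun x => ∫ ω, Set.indicator {ω | Real.exp (x/2) < η ω}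
      (fun ω => (L ω)^2) ω ∂μ with hT
  have hIndInt : ∀ x : ℝ, Integrable
      (fun ω => Set.indicator {ω | Real.exp (x/2) < η ω} (fun ω => (L ω)^2) ω) μ :=
    fun x => hlog2.indicator (hAmeas x)
  -- tail tends to zero by dominated convergence
  have hTtend : Tendsto T atTop (nhds 0) := by
    have h0 : (0:ℝ) = ∫ _ : Ω, (0:ℝ) ∂μ := by simp
    rw [hT, h0]
    refine tendsto_integral_filter_of_dominated_convergence
      (fun ω => (L ω)^2) ?_ ?_ hlog2 ?_
    · filter_upwards with x
      exact ((hLmeas.pow_const 2).indicator (hAmeas x)).aestronglyMeasurable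
    · filter_upwards with x
      filter_upwards with ω
      have h0 : 0 ≤ Set.indicator {ω | Real.exp (x/2) < η ω} (fun ω => (L ω)^2) ω :=
        Set.indicator_nonneg (fun a _ => sq_nonneg _) ω
      rw [Real.norm_eq_abs, abs_of_nonneg h0]
      exact Set.indicator_le_self' (fun a _ => sq_nonneg _) ω
    · filter_upwards with ω
      have hev : ∀ᶠ x in atTop,
          Set.indicator {ω | Real.exp (x/2) < η ω} (fun ω => (L ω)^2) ω = 0 := by
        have : Tendsto (fun x : ℝ => Real.exp (x/2)) atTop atTop :=
          Real.tendsto_exp_atTop.comp (tendsto_id.atTop_div_const two_pos)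
        filter_upwards [this.eventually_ge_atTop (η ω)] with x hx
        exact Set.indicator_of_notMem (by simpa using not_lt.mpr hx) _
      exact tendsto_const_nhds.congr' (hev.mono fun x hx => hx.symm)
  -- integrability of the main integrand, for x ≥ 0
  have hMainInt : ∀ x : ℝ, 0 ≤ x →
      Integrable (fun ω => Real.log (1 + η ω * Real.exp (-x))) μ := by
    intro x hx
    refine Integrable.mono' hLint
      (Real.measurable_log.comp
        (measurable_const.add (hmeas.mul_const _))).aestronglyMeasurable ?_
    filter_upwards [hnonneg] with ω hω
    have h1 : 0 ≤ η ω * Real.exp (-x) := mul_nonneg hω (Real.exp_pos _).le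
    have h2 : η ω * Real.exp (-x) ≤ η ω := by
      nlinarith [Real.exp_le_one_iff.mpr (neg_nonpos.mpr hx), Real.exp_pos (-x)]
    rw [Real.norm_eq_abs, abs_of_nonneg (Real.log_nonneg (by linarith))]
    exact Real.log_le_log (by linarith) (by linarith)
  -- the main integrand is a.e. nonnegative
  have hMainNonneg : ∀ x : ℝ, 0 ≤ ∫ ω, Real.log (1 + η ω * Real.exp (-x)) ∂μ := by
    intro x
    refine integral_nonneg_of_ae ?_
    filter_upwards [hnonneg] with ω hω
    exact Real.log_nonneg (by nlinarith [Real.exp_pos (-x)])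
  -- key pointwise-integrated bound
  have hkey : ∀ x : ℝ, 1 ≤ x →
      ∫ ω, Real.log (1 + η ω * Real.exp (-x)) ∂μ
        ≤ Real.exp (-x/2) + (2/x) * T x := by
    intro x hx
    have hxpos : (0:ℝ) < x := lt_of_lt_of_le one_pos hx
    have hle : ∫ ω, Real.log (1 + η ω * Real.exp (-x)) ∂μ
        ≤ ∫ ω, (Real.exp (-x/2) +
          (2/x) * Set.indicator {ω | Real.exp (x/2) < η ω} (fun ω => (L ω)^2) ω) ∂μ := by
      refine integral_mono_ae (hMainInt x (by linarith))
        ((integrable_const _).add ((hIndInt x).const_mul _)) ?_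
      filter_upwards [hnonneg] with ω hω
      rcases le_or_gt (η ω) (Real.exp (x/2)) with hcase | hcase
      · have hlog : Real.log (1 + η ω * Real.exp (-x)) ≤ η ω * Real.exp (-x) := by
          have := Real.log_le_sub_one_of_pos
            (show 0 < 1 + η ω * Real.exp (-x) by nlinarith [Real.exp_pos (-x)])
          linarith
        have h2 : η ω * Real.exp (-x) ≤ Real.exp (-x/2) := by
          have : Real.exp (x/2) * Real.exp (-x) = Real.exp (-x/2) := by
            rw [← Real.exp_add]; ring_nf
          nlinarith [Real.exp_pos (-x)]
        have h3 : 0 ≤ (2/x) * Set.indicator {ω | Real.exp (x/2) < η ω}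
            (fun ω => (L ω)^2) ω := by
          refine mul_nonneg (by positivity) (Set.indicator_nonneg ?_ _)
          intro a _; positivity
        linarith
      · have hmem : ω ∈ {ω | Real.exp (x/2) < η ω} := hcase
        rw [Set.indicator_of_mem hmem]
        have hlog1 : Real.log (1 + η ω * Real.exp (-x)) ≤ L ω := by
          have h2 : η ω * Real.exp (-x) ≤ η ω := by
            nlinarith [Real.exp_le_one_iff.mpr (by linarith : -x ≤ 0), Real.exp_pos (-x)]
          exact Real.log_le_log (by nlinarith [Real.exp_pos (-x)]) (by linarith)
        have hLbig : x/2 ≤ L ω := by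
          calc x/2 = Real.log (Real.exp (x/2)) := (Real.log_exp _).symm
            _ ≤ L ω := Real.log_le_log (Real.exp_pos _) (by linarith)
        have hLnn : 0 ≤ L ω := le_trans (by linarith) hLbig
        have : L ω ≤ (2/x) * (L ω)^2 := by
          rw [div_mul_eq_mul_div, le_div_iff₀ hxpos]
          nlinarith
        have hexp : (0:ℝ) ≤ Real.exp (-x/2) := (Real.exp_pos _).le
        linarith
    calc ∫ ω, Real.log (1 + η ω * Real.exp (-x)) ∂μ
        ≤ ∫ ω, (Real.exp (-x/2) +
          (2/x) * Set.indicator {ω | Real.exp (x/2) < η ω} (fun ω => (L ω)^2) ω) ∂μ := hle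
      _ = Real.exp (-x/2) + (2/x) * T x := by
          rw [integral_add (integrable_const _) ((hIndInt x).const_mul _),
            integral_const, integral_const_mul]
          simp [hT]
  refine ⟨⟨fun x => (2/x) * T x, ?_, ?_⟩, ?_⟩
  · filter_upwards [eventually_ge_atTop (1:ℝ)] with x hx
    exact hkey x hx
  · rw [isLittleO_iff_tendsto']
    · have : Tendsto (fun x : ℝ => 2 * T x) atTop (nhds 0) := by
        have := hTtend.const_mul (2:ℝ)
        simpa using this
      refine this.congr' ?_
      filter_upwards [eventually_gt_atTop (0:ℝ)] with x hx
      field_simp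
    · filter_upwards [eventually_gt_atTop (0:ℝ)] with x hx h
      exact absurd h (by positivity)
  · have hupper : Tendsto (fun x : ℝ => x * Real.exp (-x/2) + 2 * T x) atTop (nhds 0) := by
      have h1 : Tendsto (fun x : ℝ => x * Real.exp (-x/2)) atTop (nhds 0) := by
        have hbase := Real.tendsto_pow_mul_exp_neg_atTop_nhds_zero 1
        have hcomp : Tendsto (fun x : ℝ => x / 2) atTop atTop :=
          tendsto_id.atTop_div_const two_pos
        have := (hbase.comp hcomp).const_mul (2:ℝ)
        simp only [mul_zero] at this
        refine this.congr fun x => ?_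
        simp only [Function.comp_apply, pow_one]
        rw [neg_div]
        ring
      have h2 := hTtend.const_mul (2:ℝ)
      simpa using h1.add h2
    refine tendsto_of_tendsto_of_tendsto_of_le_of_le' tendsto_const_nhds hupper ?_ ?_
    · filter_upwards [eventually_ge_atTop (0:ℝ)] with x hx
      exact mul_nonneg hx (hMainNonneg x)
    · filter_upwards [eventually_ge_atTop (1:ℝ)] with x hx
      have hxpos : (0:ℝ) < x := lt_of_lt_of_le one_pos hx
      have := mul_le_mul_of_nonneg_left (hkey x hx) hxpos.le
      calc x * ∫ ω, Real.log (1 + η ω * Real.exp (-x)) ∂μ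
          ≤ x * (Real.exp (-x/2) + (2/x) * T x) := this
        _ = x * Real.exp (-x/2) + 2 * T x := by field_simp
end
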